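/- Let c₀₀ denote the space of eventually null real sequences endowed with the supremum norm, and let m ∈ ℕ, m ≥ 1. Then CS_∞(ℝ^m, c₀₀) is 𝔠-lineable in C(ℝ^m, c₀₀): there exists a linearly independent family of cardinality 𝔠 (the continuum) in the real vector space C(ℝ^m, c₀₀) such that every nonzero finite linear combination of its members belongs to CS_∞(ℝ^m, c₀₀). -/

import Mathlib

open scoped ENNReal

/-- `c₀₀`: the subspace of `ℓ^∞` consisting of eventually null real sequences,
endowed (as a submodule of `ℓ^∞`) with the supremum norm. -/
noncomputable def c00 : Submodule ℝ (lp (fun _ : ℕ => ℝ) ∞) where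
  carrier := {x | ∃ N : ℕ, ∀ n ≥ N, (x : ℕ → ℝ) n = 0}
  add_mem' := by
    rintro x y ⟨N, hN⟩ ⟨M, hM⟩
    refine ⟨max N M, fun n hn => ?_⟩
    have hx := hN n (le_trans (le_max_left _ _) hn)
    have hy := hM n (le_trans (le_max_right _ _) hn)
    simp [lp.coeFn_add, hx, hy]
  zero_mem' := ⟨0, fun n _ => by simp⟩
  smul_mem' := by
    rintro c x ⟨N, hN⟩
    refine ⟨N, fun n hn => ?_⟩
    simp [lp.coeFn_smul, hN n hn]

/-- `CSInf m X f` means `f : ℝ^m → X` is continuous and each fiber `f⁻¹({a})` is an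
unbounded subset of `ℝ^m`; in particular such an `f` is surjective. -/
def CSInf (m : ℕ) (X : Type*) [TopologicalSpace X]
    (f : EuclideanSpace ℝ (Fin m) → X) : Prop :=
  Continuous f ∧ ∀ a : X, ¬ Bornology.IsBounded (f ⁻¹' {a})

/-!
Pick a continuous `φ = (b, s) : ℝ → c₀₀ × ℝ` all of whose fibres are unbounded: on the window
`[3n, 3n + 3]` it runs through the radius-`n` box of `span(e₀, …, e_{n-1}) × ℝ`, using a
continuous image of the Cantor set (Hausdorff–Alexandroff) extended to `ℝ` by Tietze and damped
to `0` at the window ends. Composing with a coordinate projection `ℝ^m → ℝ` keeps the fibres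
unbounded. The maps `x ↦ e^{t s(x)} b(x)`, `t ∈ ℝ`, are linearly independent because the
exponentials are, and a nonzero combination is `x ↦ G(s(x)) b(x)` for a nonzero exponential
polynomial `G`; if `G(s₀) ≠ 0`, its fibre over `a` contains the fibre of `φ` over
`(G(s₀)⁻¹ a, s₀)`.
-/

open Real Set Filter Bornology

theorem linearIndependent_exp_mul : LinearIndependent ℝ fun t s : ℝ => exp (t * s) := by
  let χ : ℝ → Multiplicative ℝ →* ℝ := fun t =>
    { toFun := fun s => exp (t * s.toAdd)
      map_one' := by simp
      map_mul' := fun a b => by simp [mul_add, exp_add] }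
  have hχ : Function.Injective χ := fun t t' h => by
    simpa [χ] using congr($h (Multiplicative.ofAdd 1))
  exact (linearIndependent_monoidHom (Multiplicative ℝ) ℝ).comp χ hχ

section ExpTwist

variable {Y V : Type*} [TopologicalSpace Y] [AddCommGroup V] [Module ℝ V] [TopologicalSpace V]
  [IsTopologicalAddGroup V] [ContinuousSMul ℝ V]

noncomputable def expTwist (φ : C(Y, V × ℝ)) (t : ℝ) : C(Y, V) :=
  ⟨fun y => exp (t * (φ y).2) • (φ y).1, by fun_prop⟩

theorem linearCombination_expTwist_apply (φ : C(Y, V × ℝ)) (c : ℝ →₀ ℝ) (y : Y) :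
    Finsupp.linearCombination ℝ (expTwist φ) c y =
      Finsupp.linearCombination ℝ (fun t s : ℝ => exp (t * s)) c (φ y).2 • (φ y).1 := by
  simp [Finsupp.linearCombination_apply, Finsupp.sum, Finset.sum_apply, Finset.sum_smul,
    expTwist, smul_smul]

theorem linearIndependent_expTwist [Nontrivial V] {φ : C(Y, V × ℝ)}
    (hφ : Function.Surjective φ) : LinearIndependent ℝ (expTwist φ) := by
  refine linearIndependent_iff.2 fun c hc => ?_
  obtain ⟨v, hv⟩ := exists_ne (0 : V)
  refine linearIndependent_iff.1 linearIndependent_exp_mul c (funext fun s => ?_)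
  obtain ⟨y, hy⟩ := hφ (v, s)
  have := linearCombination_expTwist_apply φ c y
  rw [hc, hy] at this
  exact (smul_eq_zero.1 this.symm).resolve_right hv

theorem not_isBounded_preimage_of_mem_span_expTwist [Bornology Y] {φ : C(Y, V × ℝ)}
    (hφ : ∀ p, ¬IsBounded (φ ⁻¹' {p})) {g : C(Y, V)}
    (hg : g ∈ Submodule.span ℝ (range (expTwist φ))) (hg0 : g ≠ 0) (a : V) :
    ¬IsBounded (g ⁻¹' {a}) := by
  rw [← Finsupp.range_linearCombination] at hg
  obtain ⟨c, rfl⟩ := hg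
  set G := Finsupp.linearCombination ℝ (fun t s : ℝ => exp (t * s)) c
  obtain ⟨s, hs⟩ : ∃ s, G s ≠ 0 := by
    by_contra! hG
    exact hg0 (ContinuousMap.ext fun y => by simp [linearCombination_expTwist_apply, G, hG])
  have hsub : φ ⁻¹' {((G s)⁻¹ • a, s)} ⊆ Finsupp.linearCombination ℝ (expTwist φ) c ⁻¹' {a} :=
    fun y hy => by
      rw [mem_preimage, mem_singleton_iff] at hy ⊢
      rw [linearCombination_expTwist_apply, hy, smul_inv_smul₀ hs]
  exact fun hb => hφ _ (hb.subset hsub)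

end ExpTwist

theorem exists_continuousMap_image_cantorSet_eq {Y : Type*} [MetricSpace Y]
    [TietzeExtension.{0} Y] {K : Set Y} (hK : IsCompact K) (hne : K.Nonempty) :
    ∃ γ : C(ℝ, Y), γ '' cantorSet = K := by
  have : CompactSpace K := isCompact_iff_compactSpace.mp hK
  have : Nonempty K := hne.to_subtype
  obtain ⟨f, hf, hsurj⟩ := exists_nat_bool_continuous_surjective_of_compact K
  let h : C(cantorSet, Y) :=
    ⟨fun c => f (cantorSetHomeomorphNatToBool c), by fun_prop⟩
  obtain ⟨γ, hγ⟩ := h.exists_restrict_eq isClosed_cantorSet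
  refine ⟨γ, ?_⟩
  rw [image_eq_range]
  change range (γ.restrict cantorSet) = K
  rw [hγ]
  change range (Subtype.val ∘ f ∘ cantorSetHomeomorphNatToBool) = K
  rw [range_comp, range_comp, cantorSetHomeomorphNatToBool.surjective.range_eq, image_univ,
    hsurj.range_eq, image_univ, Subtype.range_coe]

theorem exists_continuousMap_apply_three_mul_add_one_add {X : Type*} [TopologicalSpace X]
    [AddCommMonoid X] [Module ℝ X] [ContinuousAdd X] [ContinuousSMul ℝ X] (γ : ℕ → C(ℝ, X)) :
    ∃ φ : C(ℝ, X), ∀ (n : ℕ), ∀ c ∈ Icc (0 : ℝ) 1, φ (3 * n + 1 + c) = γ n c := by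
  obtain ⟨ρ, hρ0, hρ1, -⟩ := exists_continuous_zero_one_of_isClosed
    (isOpen_Ioo (a := (0 : ℝ)) (b := 3)).isClosed_compl isClosed_Icc
    (disjoint_compl_left_iff_subset.2 (Icc_subset_Ioo (by norm_num) (by norm_num) :
      Icc (1 : ℝ) 2 ⊆ Ioo 0 3))
  let f : ℕ → ℝ → X := fun n x => ρ (x - 3 * n) • γ n (x - 3 * n - 1)
  have hf0 : ∀ (n : ℕ) x, x - 3 * (n : ℝ) ∉ Ioo 0 3 → f n x = 0 := fun n x hx => by
    simp [f, show ρ (x - 3 * n) = 0 from hρ0 hx]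
  have hfin : LocallyFinite fun n => Function.support (f n) := by
    intro x
    refine ⟨Iio (x + 1), Iio_mem_nhds (lt_add_one x), (finite_lt_nat (⌈x⌉₊ + 1)).subset ?_⟩
    rintro n ⟨y, hy, hyx⟩
    have : (3 * n : ℝ) < y := by
      by_contra h
      exact hy (hf0 n y fun hm => h (by linarith [hm.1]))
    have : (n : ℝ) < ⌈x⌉₊ + 1 := by linarith [Nat.le_ceil x, mem_Iio.1 hyx]
    exact_mod_cast this
  refine ⟨⟨fun x => ∑ᶠ n, f n x, continuous_finsum (fun n => by fun_prop) hfin⟩,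
    fun n c hc => ?_⟩
  change ∑ᶠ j, f j _ = _
  rw [finsum_eq_single _ n fun j hj => hf0 j _ fun hm => ?_]
  · have h1 : ρ (1 + c) = 1 := hρ1 ⟨by linarith [hc.1], by linarith [hc.2]⟩
    simp only [f, show 3 * (n : ℝ) + 1 + c - 3 * n = 1 + c by ring, add_sub_cancel_left, h1,
      one_smul]
  rcases Nat.lt_or_gt_of_ne hj with h | h
  · have : (j : ℝ) + 1 ≤ n := by exact_mod_cast h
    linarith [hm.2, hc.1]
  · have : (n : ℝ) + 1 ≤ j := by exact_mod_cast h
    linarith [hm.1, hc.2]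

theorem LipschitzWith.not_isBounded_preimage {α β : Type*} [PseudoMetricSpace α]
    [PseudoMetricSpace β] {K : NNReal} {f : α → β} (hf : LipschitzWith K f)
    (hsurj : Function.Surjective f) {s : Set β} (hs : ¬IsBounded s) : ¬IsBounded (f ⁻¹' s) :=
  fun hb => hs (hsurj.image_preimage s ▸ hf.isBounded_image hb)

namespace c00

noncomputable def ofFin (n : ℕ) : (Fin n → ℝ) →ₗ[ℝ] c00 where
  toFun v := ⟨⟨fun j => if h : j < n then v ⟨j, h⟩ else 0,
    (memℓp_zero_iff.2 ((finite_lt_nat n).subset fun j hj => by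
      by_contra h; exact hj (dif_neg h))).of_exponent_ge le_top⟩,
    n, fun j hj => dif_neg hj.not_gt⟩
  map_add' v w := by ext j; simp only [Submodule.coe_add, lp.coeFn_add]; split_ifs <;> simp [*]
  map_smul' a v := by ext j; simp

theorem ofFin_apply (n : ℕ) (v : Fin n → ℝ) (j : ℕ) :
    ((ofFin n v : lp (fun _ : ℕ => ℝ) ∞) : ℕ → ℝ) j = if h : j < n then v ⟨j, h⟩ else 0 :=
  rfl

instance : Nontrivial c00 :=
  ⟨⟨ofFin 1 1, 0, fun h => by
    simpa [ofFin_apply] using congr(((($h : c00) : lp _ ∞) : ℕ → ℝ) 0)⟩⟩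

theorem eventually_mem_image_closedBall (p : c00 × ℝ) :
    ∀ᶠ n : ℕ in atTop, p ∈ Prod.map (ofFin n) id '' Metric.closedBall 0 n := by
  obtain ⟨⟨b, N, hN⟩, s⟩ := p
  filter_upwards [eventually_ge_atTop N, eventually_ge_atTop ⌈max ‖b‖ |s|⌉₊] with n hN' hn
  have hbs : max ‖b‖ |s| ≤ n := (Nat.le_ceil _).trans (by exact_mod_cast hn)
  refine ⟨(fun i => b i, s), ?_, ?_⟩
  · rw [mem_closedBall_zero_iff, Prod.norm_def, max_le_iff,
      pi_norm_le_iff_of_nonneg (by positivity)]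
    exact ⟨fun i => (lp.norm_apply_le_norm ENNReal.top_ne_zero b i).trans (le_of_max_le_left hbs),
      by simpa using le_of_max_le_right hbs⟩
  · ext j
    · simp only [Prod.map_fst, ofFin_apply]
      split_ifs with h
      · rfl
      · exact (hN j (by omega)).symm
    · rfl

end c00

set_option synthInstance.maxHeartbeats 100000 in
theorem exists_continuousMap_real_c00_prod_not_isBounded_preimage :
    ∃ φ : C(ℝ, c00 × ℝ), ∀ p, ¬IsBounded (φ ⁻¹' {p}) := by
  have hγ (n : ℕ) : ∃ γ : C(ℝ, (Fin n → ℝ) × ℝ), γ '' cantorSet = Metric.closedBall 0 n :=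
    exists_continuousMap_image_cantorSet_eq (isCompact_closedBall 0 n)
      (Metric.nonempty_closedBall.2 n.cast_nonneg)
  choose γ hγ using hγ
  let ι (n : ℕ) : C((Fin n → ℝ) × ℝ, c00 × ℝ) :=
    ⟨Prod.map (c00.ofFin n) id,
      (c00.ofFin n).continuous_of_finiteDimensional.prodMap continuous_id⟩
  obtain ⟨φ, hφ⟩ := exists_continuousMap_apply_three_mul_add_one_add fun n => (ι n).comp (γ n)
  refine ⟨φ, fun p hb => ?_⟩
  obtain ⟨R, hR⟩ := (isBounded_iff_bddBelow_bddAbove.1 hb).2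
  obtain ⟨n, ⟨e, he, rfl⟩, hn⟩ := ((c00.eventually_mem_image_closedBall p).and
    (tendsto_natCast_atTop_atTop.eventually_ge_atTop R)).exists
  obtain ⟨c, hc, rfl⟩ := (hγ n).symm ▸ he
  have hc01 := cantorSet_subset_unitInterval hc
  have : 3 * n + 1 + c ≤ R := hR (hφ n c hc01)
  linarith [hc01.1]

theorem stmt14 (m : ℕ) (hm : 1 ≤ m) :
    ∃ (ι : Type) (F : ι → C(EuclideanSpace ℝ (Fin m), c00)),
      Cardinal.mk ι = Cardinal.continuum ∧
      LinearIndependent ℝ F ∧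
      ∀ g ∈ Submodule.span ℝ (Set.range F), g ≠ 0 → CSInf m c00 ⇑g := by
  obtain ⟨φ, hφ⟩ := exists_continuousMap_real_c00_prod_not_isBounded_preimage
  let coord := EuclideanSpace.proj (𝕜 := ℝ) (⟨0, hm⟩ : Fin m)
  have hcoord : Function.Surjective coord := fun r =>
    ⟨EuclideanSpace.single ⟨0, hm⟩ r, by simp [coord]⟩
  let ψ : C(EuclideanSpace ℝ (Fin m), c00 × ℝ) := φ.comp ⟨coord, coord.continuous⟩
  have hψ (p : c00 × ℝ) : ¬IsBounded (ψ ⁻¹' {p}) :=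
    coord.lipschitz.not_isBounded_preimage hcoord (hφ p)
  refine ⟨ℝ, expTwist ψ, Cardinal.mk_real,
    linearIndependent_expTwist fun p => nonempty_of_not_isBounded (hψ p),
    fun g hg hg0 => ⟨g.continuous, not_isBounded_preimage_of_mem_span_expTwist hψ hg hg0⟩⟩
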